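/- Let n = ∏_{i=1}^{s} p_i^{k_i} and let t, x be positive integers with gcd(σ_x(n)+t, n^x) = 1. Suppose there exists j with 1 ≤ j ≤ s such that p_j^x < (1/t)·σ_x(n/p_j^{k_j}), and σ_x(p_j^{k_j}) has a divisor of the form d^x > 1 (d a positive integer) satisfying I(x, p_j^{k_j})·I(x,d) > (σ_x(n)+t)/n^x and gcd(d^x, t) = 1. Then (σ_x(n)+t)/n^x is an x-th abundancy outlaw. -/

import Mathlib

/-!
If `I(x, a) = (σₓ(n) + t) / nˣ`, coprimality of numerator and denominator forces `n ∣ a`, say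
`a = n c`. Write `n = pᵏ m` with `p = p_j`. If `p ∣ c` then `p^(k+1) m ∣ a`, and the hypothesis
`pˣ t < σₓ(m)` makes `I(x, p^(k+1) m)` already exceed the target, contradicting monotonicity of `I`
along divisibility. So `pᵏ` is a unitary factor of `a` and `dˣ ∣ σₓ(pᵏ) ∣ σₓ(a) = (σₓ(n) + t) cˣ`;
as `dˣ` is coprime to `σₓ(n) + t`, this gives `d ∣ c`. Then `pᵏ d ∣ a`, so
`I(x, a) ≥ I(x, pᵏ) I(x, d)`, which exceeds the target.
-/

open Finset Nat

/-- Sum of x-th powers of divisors. -/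
def sigmaX (x n : ℕ) : ℕ := ∑ d ∈ n.divisors, d ^ x

/-- The x-th abundancy index as a rational number. -/
def Iq (x n : ℕ) : ℚ := (sigmaX x n : ℚ) / (n : ℚ) ^ x

theorem sigmaX_eq_sigma (x n : ℕ) : sigmaX x n = ArithmeticFunction.sigma x n := rfl

theorem sigmaX_mul (x : ℕ) {m n : ℕ} (h : Coprime m n) :
    sigmaX x (m * n) = sigmaX x m * sigmaX x n :=
  ArithmeticFunction.isMultiplicative_sigma.map_mul_of_coprime h

theorem sigmaX_prime_pow_succ (x : ℕ) {p : ℕ} (hp : p.Prime) (k : ℕ) :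
    sigmaX x (p ^ (k + 1)) = p ^ x * sigmaX x (p ^ k) + 1 := by
  simp only [sigmaX_eq_sigma, ArithmeticFunction.sigma_apply_prime_pow hp,
    Finset.sum_range_succ' _ (k + 1), Finset.mul_sum, zero_mul, pow_zero]
  congr 1
  refine Finset.sum_congr rfl fun i _ => ?_
  rw [← pow_add, succ_mul, add_comm]

theorem sigmaX_prime_pow_succ_mul (x : ℕ) {p m : ℕ} (hp : p.Prime) (hpm : ¬ p ∣ m) (k : ℕ) :
    sigmaX x (p ^ (k + 1) * m) = p ^ x * sigmaX x (p ^ k * m) + sigmaX x m := by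
  have hcop (i : ℕ) : Coprime (p ^ i) m := ((hp.coprime_iff_not_dvd).2 hpm).pow_left i
  rw [sigmaX_mul x (hcop _), sigmaX_mul x (hcop _), sigmaX_prime_pow_succ x hp]
  ring

theorem Iq_eq_sum_inv (x : ℕ) {n : ℕ} (hn : n ≠ 0) :
    Iq x n = ∑ e ∈ n.divisors, ((e : ℚ) ^ x)⁻¹ := by
  rw [← Nat.sum_div_divisors n (fun e => ((e : ℚ) ^ x)⁻¹), Iq, sigmaX]
  push_cast
  rw [Finset.sum_div]
  refine Finset.sum_congr rfl fun e he => ?_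
  have he : e ∣ n := Nat.dvd_of_mem_divisors he
  rw [Nat.cast_div he (by exact_mod_cast ne_zero_of_dvd_ne_zero hn he), div_pow, inv_div]

theorem Iq_le_Iq_of_dvd (x : ℕ) {m a : ℕ} (ha : a ≠ 0) (h : m ∣ a) : Iq x m ≤ Iq x a := by
  rw [Iq_eq_sum_inv x (ne_zero_of_dvd_ne_zero ha h), Iq_eq_sum_inv x ha]
  exact Finset.sum_le_sum_of_subset_of_nonneg (Nat.divisors_subset_of_dvd ha h)
    fun _ _ _ => by positivity

theorem Iq_mul (x : ℕ) {m n : ℕ} (h : Coprime m n) : Iq x (m * n) = Iq x m * Iq x n := by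
  rw [Iq, Iq, Iq, sigmaX_mul x h, Nat.cast_mul, Nat.cast_mul, mul_pow]
  exact (div_mul_div_comm _ _ _ _).symm

theorem Iq_eq_div_iff (x : ℕ) {a n N : ℕ} (ha : a ≠ 0) (hn : n ≠ 0) :
    Iq x a = (N : ℚ) / (n : ℚ) ^ x ↔ sigmaX x a * n ^ x = N * a ^ x := by
  rw [Iq, div_eq_div_iff (by positivity) (by positivity)]
  exact_mod_cast Iff.rfl

theorem dvd_of_Iq_eq_div {x a n N : ℕ} (hx : x ≠ 0) (ha : a ≠ 0) (hn : n ≠ 0)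
    (hcop : Coprime N (n ^ x)) (h : Iq x a = (N : ℚ) / (n : ℚ) ^ x) : n ∣ a := by
  rw [Iq_eq_div_iff x ha hn] at h
  refine (Nat.pow_dvd_pow_iff hx).1 (hcop.symm.dvd_of_dvd_mul_left ?_)
  exact ⟨sigmaX x a, by rw [← h, mul_comm]⟩

theorem sigmaX_mul_eq_of_Iq_mul_eq_div {x n c N : ℕ} (hn : n ≠ 0) (hc : c ≠ 0)
    (h : Iq x (n * c) = (N : ℚ) / (n : ℚ) ^ x) : sigmaX x (n * c) = N * c ^ x := by
  rw [Iq_eq_div_iff x (mul_ne_zero hn hc) hn, mul_pow] at h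
  exact Nat.eq_of_mul_eq_mul_right (pow_pos (pos_of_ne_zero hn) x) (by rw [h]; ring)

theorem not_dvd_prod_erase_pow_of_injective {ι : Type*} [DecidableEq ι] {p : ι → ℕ}
    (hp : ∀ i, (p i).Prime) (hinj : Function.Injective p) (k : ι → ℕ) (s : Finset ι) (j : ι) :
    ¬ p j ∣ ∏ i ∈ s.erase j, p i ^ k i := by
  intro h
  obtain ⟨i, hi, hji⟩ := (hp j).prime.exists_mem_finset_dvd h
  have hpij : p j = p i := (Nat.prime_dvd_prime_iff_eq (hp j) (hp i)).1 ((hp j).dvd_of_dvd_pow hji)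
  exact (Finset.mem_erase.1 hi).1 (hinj hpij).symm

theorem mul_lt_of_cast_lt_one_div_mul {a t b : ℕ} (h : (a : ℚ) < 1 / (t : ℚ) * (b : ℚ)) :
    a * t < b := by
  rcases Nat.eq_zero_or_pos t with rfl | ht
  · simp only [CharP.cast_eq_zero, div_zero, zero_mul] at h
    exact absurd h (not_lt.2 (Nat.cast_nonneg a))
  · rw [one_div, inv_mul_eq_div, lt_div_iff₀ (by exact_mod_cast ht)] at h
    exact_mod_cast h

section PrimePowMul

variable {x t p k m : ℕ}

theorem div_lt_Iq_prime_pow_succ_mul (hp : p.Prime) (hpm : ¬ p ∣ m)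
    (ht : p ^ x * t < sigmaX x m) :
    ((sigmaX x (p ^ k * m) + t : ℕ) : ℚ) / ((p ^ k * m : ℕ) : ℚ) ^ x
      < Iq x (p ^ (k + 1) * m) := by
  have hm : 0 < m := Nat.pos_of_ne_zero fun hm => hpm (hm ▸ dvd_zero p)
  have hn : (0 : ℚ) < ((p ^ k * m : ℕ) : ℚ) ^ x := by
    have := hp.pos; positivity
  have hp0 : (0 : ℚ) < (p : ℚ) ^ x := by have := hp.pos; positivity
  have key : p ^ x * (sigmaX x (p ^ k * m) + t) < sigmaX x (p ^ (k + 1) * m) := by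
    rw [sigmaX_prime_pow_succ_mul x hp hpm, mul_add]
    omega
  have hpow : (((p ^ (k + 1) * m : ℕ)) : ℚ) ^ x = (p : ℚ) ^ x * ((p ^ k * m : ℕ) : ℚ) ^ x := by
    push_cast; ring
  rw [Iq, hpow, ← div_div, div_lt_div_iff_of_pos_right hn, lt_div_iff₀ hp0, mul_comm]
  exact_mod_cast key

theorem div_lt_Iq_of_prime_pow_succ_mul_dvd {a : ℕ} (hp : p.Prime) (hpm : ¬ p ∣ m)
    (ht : p ^ x * t < sigmaX x m) (ha : a ≠ 0) (h : p ^ (k + 1) * m ∣ a) :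
    ((sigmaX x (p ^ k * m) + t : ℕ) : ℚ) / ((p ^ k * m : ℕ) : ℚ) ^ x < Iq x a :=
  (div_lt_Iq_prime_pow_succ_mul hp hpm ht).trans_le (Iq_le_Iq_of_dvd x ha h)

theorem dvd_of_sigmaX_prime_pow_mul_mul_eq {c d : ℕ} (hx : x ≠ 0) (hp : p.Prime)
    (hpm : ¬ p ∣ m) (hpc : ¬ p ∣ c) (hdvd : d ^ x ∣ sigmaX x (p ^ k)) (hdt : Coprime (d ^ x) t)
    (h : sigmaX x (p ^ k * m * c) = (sigmaX x (p ^ k * m) + t) * c ^ x) : d ∣ c := by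
  have hcop {y : ℕ} (hy : ¬ p ∣ y) : Coprime (p ^ k) y := ((hp.coprime_iff_not_dvd).2 hy).pow_left k
  have hdN : Coprime (d ^ x) (sigmaX x (p ^ k * m) + t) := by
    obtain ⟨e, he⟩ := hdvd
    rw [sigmaX_mul x (hcop hpm), he, mul_assoc, add_comm]
    exact (Nat.coprime_add_mul_left_right _ _ _).2 hdt
  refine (Nat.pow_dvd_pow_iff hx).1 (hdN.dvd_of_dvd_mul_left ?_)
  rw [← h, mul_assoc, sigmaX_mul x (hcop fun hmc => (hp.dvd_mul.1 hmc).elim hpm hpc)]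
  exact hdvd.mul_right _

theorem Iq_ne_of_prime_pow_mul {d a : ℕ} (hx : x ≠ 0) (hp : p.Prime) (hpm : ¬ p ∣ m)
    (hcop : Coprime (sigmaX x (p ^ k * m) + t) ((p ^ k * m) ^ x))
    (ht : p ^ x * t < sigmaX x m) (hdvd : d ^ x ∣ sigmaX x (p ^ k)) (hdt : Coprime (d ^ x) t)
    (hI : ((sigmaX x (p ^ k * m) + t : ℕ) : ℚ) / ((p ^ k * m : ℕ) : ℚ) ^ x
      < Iq x (p ^ k) * Iq x d) (ha : a ≠ 0) :
    Iq x a ≠ ((sigmaX x (p ^ k * m) + t : ℕ) : ℚ) / ((p ^ k * m : ℕ) : ℚ) ^ x := by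
  intro h
  have hn : p ^ k * m ≠ 0 := mul_ne_zero (pow_ne_zero k hp.ne_zero) fun hm => hpm (hm ▸ dvd_zero p)
  obtain ⟨c, rfl⟩ := dvd_of_Iq_eq_div hx ha hn hcop h
  have hpc : ¬ p ∣ c := by
    rintro ⟨c', rfl⟩
    refine (div_lt_Iq_of_prime_pow_succ_mul_dvd hp hpm ht ha ⟨c', by ring⟩).ne' h
  have hdc : d ∣ c := dvd_of_sigmaX_prime_pow_mul_mul_eq hx hp hpm hpc hdvd hdt
    (sigmaX_mul_eq_of_Iq_mul_eq_div hn (right_ne_zero_of_mul ha) h)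
  have hpd : Coprime (p ^ k) d :=
    ((hp.coprime_iff_not_dvd).2 fun hpd => hpc (hpd.trans hdc)).pow_left k
  have hle : Iq x (p ^ k * d) ≤ Iq x (p ^ k * m * c) :=
    Iq_le_Iq_of_dvd x ha (mul_assoc (p ^ k) m c ▸ mul_dvd_mul_left _ (hdc.trans (dvd_mul_left c m)))
  rw [Iq_mul x hpd] at hle
  exact (hI.trans_le hle).ne' h

end PrimePowMul

theorem stmt_11_general (x t s : ℕ) (hx : 0 < x)
    (p : Fin s → ℕ) (k : Fin s → ℕ)
    (hp : ∀ i, (p i).Prime) (hinj : Function.Injective p)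
    (n : ℕ) (hn : n = ∏ i, p i ^ k i)
    (hcop : Nat.gcd (sigmaX x n + t) (n ^ x) = 1)
    (j : Fin s)
    (hpj : (p j : ℚ) ^ x < (1 / (t : ℚ)) * (sigmaX x (n / p j ^ k j) : ℚ))
    (d : ℕ) (hddvd : d ^ x ∣ sigmaX x (p j ^ k j))
    (hI : Iq x (p j ^ k j) * Iq x d > (sigmaX x n + t : ℚ) / (n : ℚ) ^ x)
    (hdt : Nat.gcd (d ^ x) t = 1) :
    ¬ ∃ a : ℕ, 0 < a ∧ Iq x a = (sigmaX x n + t : ℚ) / (n : ℚ) ^ x := by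
  rintro ⟨a, ha, h⟩
  set m := ∏ i ∈ Finset.univ.erase j, p i ^ k i
  have hnm : n = p j ^ k j * m := hn.trans (Finset.mul_prod_erase _ _ (Finset.mem_univ j)).symm
  have hpm : ¬ p j ∣ m := not_dvd_prod_erase_pow_of_injective hp hinj k _ j
  have ht : p j ^ x * t < sigmaX x m := by
    rw [hnm, Nat.mul_div_cancel_left _ (pow_pos (hp j).pos _)] at hpj
    exact mul_lt_of_cast_lt_one_div_mul (by exact_mod_cast hpj)
  subst hnm
  rw [← Nat.cast_add] at hI h
  exact Iq_ne_of_prime_pow_mul hx.ne' (hp j) hpm hcop ht hddvd hdt hI ha.ne' h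

theorem stmt_11 (x t s : ℕ) (hx : 0 < x) (ht : 0 < t) (hs : 0 < s)
    (p : Fin s → ℕ) (k : Fin s → ℕ)
    (hp : ∀ i, (p i).Prime) (hinj : Function.Injective p) (hk : ∀ i, 0 < k i)
    (n : ℕ) (hn : n = ∏ i, p i ^ k i)
    (hcop : Nat.gcd (sigmaX x n + t) (n ^ x) = 1)
    (j : Fin s)
    (hpj : (p j : ℚ) ^ x < (1 / (t : ℚ)) * (sigmaX x (n / p j ^ k j) : ℚ))
    (d : ℕ) (hd1 : 1 < d ^ x) (hddvd : d ^ x ∣ sigmaX x (p j ^ k j))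
    (hI : Iq x (p j ^ k j) * Iq x d > (sigmaX x n + t : ℚ) / (n : ℚ) ^ x)
    (hdt : Nat.gcd (d ^ x) t = 1) :
    ¬ ∃ a : ℕ, 0 < a ∧ Iq x a = (sigmaX x n + t : ℚ) / (n : ℚ) ^ x :=
  stmt_11_general x t s hx p k hp hinj n hn hcop j hpj d hddvd hI hdt
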